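/- Let P be a lattice (d,k)-polytope with d ≥ 3, and let u, v be vertices of P whose edge-graph distance equals δ(d−1,k)+k (assuming such exists). Then u + v = (k,k,...,k). -/

import Mathlib

open Set

noncomputable def edgeGraph (d : ℕ) (P : Set (Fin d → ℝ)) : SimpleGraph (Fin d → ℝ) where
  Adj a b := a ≠ b ∧ IsExtreme ℝ P (segment ℝ a b)
  symm := by
    constructor
    intro a b h
    try dsimp only at h ⊢
    exact ⟨h.1.symm, by rw [segment_symm]; exact h.2⟩
  loopless := by
    constructor
    intro a h
    exact h.1 rfl

/-- Edge-graph diameter of a polytope, as the sup of pairwise distances between vertices. -/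
noncomputable def polyDiam (d : ℕ) (P : Set (Fin d → ℝ)) : ℕ :=
  sSup {n : ℕ | ∃ u ∈ P.extremePoints ℝ, ∃ v ∈ P.extremePoints ℝ,
    (edgeGraph d P).dist u v = n}

/-- A lattice (d,k)-polytope: convex hull of a nonempty finite set of points in {0,…,k}^d. -/
def IsLatticePolytope (d k : ℕ) (P : Set (Fin d → ℝ)) : Prop :=
  ∃ V : Finset (Fin d → ℝ), V.Nonempty ∧
    (∀ x ∈ V, ∀ i, ∃ m : ℕ, m ≤ k ∧ x i = (m : ℝ)) ∧
    P = convexHull ℝ (V : Set (Fin d → ℝ))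

/-- δ(d,k): the largest edge-graph diameter of a lattice (d,k)-polytope. -/
noncomputable def deltaLP (d k : ℕ) : ℕ :=
  sSup {n : ℕ | ∃ P : Set (Fin d → ℝ), IsLatticePolytope d k P ∧ polyDiam d P = n}

/-!
Fix a coordinate `i`. At a vertex of a polytope that does not minimise a linear functional `f`,
the pivoting step of the simplex method finds an edge along which `f` strictly decreases: tilt a
functional exposing the vertex by `f` until it first exposes an edge, after a generic perturbation
that breaks ties between the candidate edges. Following such edges for `f = x ↦ x i` leads from `u`
to the face `F` of `P` on which `x i` is minimal in at most `u i` steps, because vertices have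
integer coordinates; the same holds for `v`. The face `F` lies in a coordinate hyperplane, so it is
a lattice `(d - 1, k)`-polytope and its two entry points are joined inside `F` by at most
`δ(d - 1, k)` edges. Hence `d(u, v) ≤ δ(d - 1, k) + u i + v i`, and, applying this to the image of
`P` under the symmetry `x ↦ (k, …, k) - x` of the cube,
`d(u, v) ≤ δ(d - 1, k) + (k - u i) + (k - v i)`. If `d(u, v) = δ(d - 1, k) + k`, both bounds are
sharp and `u i + v i = k`.
-/

section Extreme

variable {E F : Type*} [AddCommGroup E] [Module ℝ E] [AddCommGroup F] [Module ℝ F]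

theorem isExtreme_image_iff {T : E →ᵃ[ℝ] F} (hT : Function.Injective T) {A B : Set E} :
    IsExtreme ℝ (T '' A) (T '' B) ↔ IsExtreme ℝ A B := by
  simp only [isExtreme_iff, image_subset_image_iff hT, forall_mem_image, ← image_openSegment,
    hT.mem_set_image]

theorem image_mem_extremePoints_image_iff {T : E →ᵃ[ℝ] F} (hT : Function.Injective T)
    {A : Set E} {x : E} : T x ∈ (T '' A).extremePoints ℝ ↔ x ∈ A.extremePoints ℝ := by
  rw [← isExtreme_singleton, ← isExtreme_singleton, ← image_singleton, isExtreme_image_iff hT]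

theorem smul_sub_ne_smul_sub_of_mem_extremePoints {A : Set E} {u y z : E} (hu : u ∈ A)
    (hy : y ∈ A.extremePoints ℝ) (hz : z ∈ A.extremePoints ℝ) (hyz : y ≠ z) {a b : ℝ}
    (ha : 0 < a) (hb : 0 < b) : a • (y - u) ≠ b • (z - u) := by
  wlog hab : a ≤ b generalizing a b y z
  · exact fun h => this hz hy hyz.symm hb ha (le_of_not_ge hab) h.symm
  intro h
  rcases hab.lt_or_eq with hlt | rfl
  · have hz' : z ∈ openSegment ℝ y u := by
      refine ⟨a / b, 1 - a / b, div_pos ha hb, by rw [sub_pos, div_lt_one hb]; exact hlt,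
        by ring, ?_⟩
      have : (a / b) • y + (1 - a / b) • u - z = b⁻¹ • (a • (y - u) - b • (z - u)) := by
        match_scalars <;> field_simp
        ring
      rwa [h, sub_self, smul_zero, sub_eq_zero] at this
    exact hyz (hz.2 hy.1 hu hz')
  · exact hyz (sub_left_injective (smul_right_injective E ha.ne' h))

end Extreme

section Polytope

variable {E : Type*} [NormedAddCommGroup E] [NormedSpace ℝ E]

theorem convexHull_extremePoints_of_finite {K : Set E} (hK : IsCompact K) (hKc : Convex ℝ K)
    (hfin : (K.extremePoints ℝ).Finite) : convexHull ℝ (K.extremePoints ℝ) = K := by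
  rw [← (hfin.isClosed_convexHull ℝ).closure_eq, closure_convexHull_extremePoints hK hKc]

theorem Finset.finite_extremePoints_convexHull (V : Finset E) :
    ((convexHull ℝ (V : Set E)).extremePoints ℝ).Finite :=
  V.finite_toSet.subset extremePoints_convexHull_subset

theorem Finset.convexHull_extremePoints_convexHull (V : Finset E) :
    convexHull ℝ ((convexHull ℝ (V : Set E)).extremePoints ℝ) = convexHull ℝ (V : Set E) :=
  convexHull_extremePoints_of_finite (V.finite_toSet.isCompact_convexHull ℝ)
    (convex_convexHull ℝ _) V.finite_extremePoints_convexHull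

theorem IsExposed.convexHull_extremePoints {V : Finset E} {F : Set E}
    (hF : IsExposed ℝ (convexHull ℝ (V : Set E)) F) : convexHull ℝ (F.extremePoints ℝ) = F := by
  refine convexHull_extremePoints_of_finite (hF.isCompact (V.finite_toSet.isCompact_convexHull ℝ))
    (hF.convex (convex_convexHull ℝ _)) ?_
  rw [hF.isExtreme.extremePoints_eq]
  exact V.finite_extremePoints_convexHull.subset inter_subset_right

theorem IsExposed.eq_convexHull_filter {V : Finset E} {F : Set E} [DecidablePred (· ∈ F)]
    (hF : IsExposed ℝ (convexHull ℝ (V : Set E)) F) :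
    F = convexHull ℝ (V.filter (· ∈ F) : Set E) := by
  refine subset_antisymm ?_ (convexHull_min ?_ (hF.convex (convex_convexHull ℝ _)))
  · conv_lhs => rw [← hF.convexHull_extremePoints]
    refine convexHull_mono fun x hx => ?_
    rw [hF.isExtreme.extremePoints_eq] at hx
    simpa [hx.1] using extremePoints_convexHull_subset hx.2
  · intro x hx
    simpa using (Finset.mem_filter.1 hx).2

theorem IsExposed.eq_segment {V : Finset E} {F : Set E} {u w : E}
    (hF : IsExposed ℝ (convexHull ℝ (V : Set E)) F) (hu : u ∈ F) (hw : w ∈ F)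
    (h : F.extremePoints ℝ ⊆ {u, w}) : F = segment ℝ u w := by
  refine subset_antisymm ?_ ((hF.convex (convex_convexHull ℝ _)).segment_subset hu hw)
  rw [← convexHull_pair, ← hF.convexHull_extremePoints]
  exact convexHull_mono h

theorem isExposed_setOf_isMinOn (φ : StrongDual ℝ E) (A : Set E) :
    IsExposed ℝ A {x ∈ A | IsMinOn φ A x} := by
  refine fun _ => ⟨-φ, ?_⟩
  ext x
  simp [isMinOn_iff]

theorem isMinOn_convexHull_of_forall_extremePoints (V : Finset E) (φ : StrongDual ℝ E) {a : E}
    (h : ∀ y ∈ (convexHull ℝ (V : Set E)).extremePoints ℝ, φ a ≤ φ y) :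
    IsMinOn φ (convexHull ℝ (V : Set E)) a := by
  rw [← V.convexHull_extremePoints_convexHull]
  exact isMinOn_iff.2 fun x hx => convexHull_min h (convex_halfSpace_ge φ.toLinearMap.isLinear _) hx

end Polytope

section Pivot

variable {E : Type*} [NormedAddCommGroup E] [NormedSpace ℝ E]

open Filter Topology

theorem exists_forall_lt_of_mem_extremePoints (S : Finset E) {u : E}
    (hu : u ∈ (convexHull ℝ (S : Set E)).extremePoints ℝ) :
    ∃ g : StrongDual ℝ E, ∀ y ∈ S, y ≠ u → g u < g y := by
  classical
  have hu' : u ∉ convexHull ℝ ((S.erase u : Finset E) : Set E) := by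
    refine fun h => ((convex_convexHull ℝ _).mem_extremePoints_iff_mem_sdiff_convexHull_sdiff.1
      hu).2 (convexHull_mono ?_ h)
    rw [Finset.coe_erase]
    exact sdiff_subset_sdiff_left (subset_convexHull ℝ _)
  obtain ⟨g, c, hgu, hg⟩ := geometric_hahn_banach_point_closed (convex_convexHull ℝ _)
    ((S.erase u).finite_toSet.isClosed_convexHull ℝ) hu'
  exact ⟨g, fun y hy hyu => hgu.trans (hg y (subset_convexHull ℝ _ (by simp [hyu, hy])))⟩

theorem exists_strongDual_forall_ne_zero {ι : Type*} [Finite ι] (q : ι → E) (hq : ∀ i, q i ≠ 0) :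
    ∃ h : StrongDual ℝ E, ∀ i, h (q i) ≠ 0 := by
  refine Module.Dual.exists_forall_ne_zero_of_forall_exists
    (fun i => (ContinuousLinearMap.apply ℝ ℝ (q i)).toLinearMap) fun i => ?_
  obtain ⟨h, -, hh⟩ := exists_dual_vector ℝ (q i) (norm_ne_zero_iff.2 (hq i))
  exact ⟨h, by simpa [hh] using hq i⟩

theorem exists_forall_lt_and_forall_ne_zero (S : Finset E) {u : E}
    (hu : u ∈ (convexHull ℝ (S : Set E)).extremePoints ℝ) {ι : Type*} [Finite ι] (q : ι → E)
    (hq : ∀ i, q i ≠ 0) :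
    ∃ g : StrongDual ℝ E, (∀ y ∈ S, y ≠ u → g u < g y) ∧ ∀ i, g (q i) ≠ 0 := by
  obtain ⟨g, hg⟩ := exists_forall_lt_of_mem_extremePoints S hu
  obtain ⟨h, hh⟩ := exists_strongDual_forall_ne_zero q hq
  have hnear : ∀ᶠ ε in 𝓝 (0 : ℝ), ∀ y ∈ S, y ≠ u → (g + ε • h) u < (g + ε • h) y := by
    refine (eventually_all_finset S).2 fun y hy => ?_
    by_cases hyu : y = u
    · exact .of_forall fun _ h => (h hyu).elim
    · have : ∀ᶠ ε in 𝓝 (0 : ℝ), g u + ε * h u < g y + ε * h y :=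
        ContinuousAt.eventually_lt (by fun_prop) (by fun_prop) (by simpa using hg y hy hyu)
      filter_upwards [this] with ε hε _
      simpa using hε
  obtain ⟨δ, hδ, hball⟩ := Metric.eventually_nhds_iff.1 hnear
  obtain ⟨ε, hε, hεq⟩ := (Set.Ioo_infinite hδ).exists_notMem_finite
    (Set.finite_range fun i => -g (q i) / h (q i))
  refine ⟨g + ε • h, hball ?_, fun i h0 => hεq ⟨i, ?_⟩⟩
  · rw [Real.dist_eq, sub_zero, abs_of_pos hε.1]
    exact hε.2
  · simp only [add_apply, smul_apply, smul_eq_mul] at h0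
    field_simp [hh i]
    linarith

theorem exists_exposing_slope_injOn (V : Finset E) {u : E}
    (hu : u ∈ (convexHull ℝ (V : Set E)).extremePoints ℝ) (f : StrongDual ℝ E) :
    ∃ g : StrongDual ℝ E, (∀ y ∈ V, y ≠ u → g u < g y) ∧
      {y ∈ (convexHull ℝ (V : Set E)).extremePoints ℝ | f y < f u}.InjOn
        fun y => (g y - g u) / (f u - f y) := by
  set Y := {y ∈ (convexHull ℝ (V : Set E)).extremePoints ℝ | f y < f u}
  have := (V.finite_extremePoints_convexHull.subset (sep_subset _ _) : Y.Finite).to_subtype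
  -- `g (q ⟨(y, z), _⟩) = 0` says exactly that `y` and `z` have the same slope
  let q : {p : Y × Y // p.1 ≠ p.2} → E := fun p =>
    (f u - f p.1.2) • ((p.1.1 : E) - u) - (f u - f p.1.1) • ((p.1.2 : E) - u)
  have hq : ∀ p, q p ≠ 0 := fun ⟨(y, z), hyz⟩ => sub_ne_zero.2 <|
    smul_sub_ne_smul_sub_of_mem_extremePoints hu.1 y.2.1 z.2.1 (Subtype.coe_injective.ne hyz)
      (sub_pos.2 z.2.2) (sub_pos.2 y.2.2)
  obtain ⟨g, hgu, hgq⟩ := exists_forall_lt_and_forall_ne_zero V hu q hq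
  refine ⟨g, hgu, fun y hy z hz hyz => ?_⟩
  by_contra hne
  apply hgq ⟨(⟨y, hy⟩, ⟨z, hz⟩), by simpa using hne⟩
  simp only [div_eq_div_iff (sub_pos.2 hy.2).ne' (sub_pos.2 hz.2).ne'] at hyz
  simp only [q, map_sub, map_smul, smul_eq_mul]
  linarith

theorem exists_functional_exposing_pair_of_lt (V : Finset E) {u : E}
    (hu : u ∈ (convexHull ℝ (V : Set E)).extremePoints ℝ) (f : StrongDual ℝ E)
    (hf : ∃ y ∈ (convexHull ℝ (V : Set E)).extremePoints ℝ, f y < f u) :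
    ∃ φ : StrongDual ℝ E, ∃ w ∈ (convexHull ℝ (V : Set E)).extremePoints ℝ, f w < f u ∧
      φ w = φ u ∧ ∀ y ∈ (convexHull ℝ (V : Set E)).extremePoints ℝ,
        φ u ≤ φ y ∧ (φ y = φ u → y = u ∨ y = w) := by
  set P := convexHull ℝ (V : Set E)
  set Y := {y ∈ P.extremePoints ℝ | f y < f u}
  obtain ⟨g, hgu, hinj⟩ := exists_exposing_slope_injOn V hu f
  -- pivot to the vertex `w` of `Y` seen from `u` under the smallest slope `t w`
  let t : E → ℝ := fun y => (g y - g u) / (f u - f y)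
  obtain ⟨w, hwY, hwt⟩ := Y.exists_min_image t
    (V.finite_extremePoints_convexHull.subset (sep_subset _ _)) hf
  obtain ⟨hw, hwu⟩ := hwY
  have htw : 0 < t w := div_pos (sub_pos.2 (hgu w (extremePoints_convexHull_subset hw)
    (fun h => hwu.ne (h ▸ rfl)))) (sub_pos.2 hwu)
  have hφY : ∀ y ∈ Y, (g + t w • f) y - (g + t w • f) u = (f u - f y) * (t y - t w) := by
    intro y hy
    have := (sub_pos.2 hy.2).ne'
    simp only [add_apply, smul_apply, smul_eq_mul, t]
    field_simp
    ring
  refine ⟨g + t w • f, w, hw, hwu, by linarith [hφY w ⟨hw, hwu⟩], fun y hy => ?_⟩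
  by_cases hyY : y ∈ Y
  · have hfy := sub_pos.2 hyY.2
    refine ⟨by nlinarith [hφY y hyY, hwt y hyY], fun hyφ => .inr (hinj hyY ⟨hw, hwu⟩ ?_)⟩
    have := hφY y hyY
    rw [hyφ, sub_self, zero_eq_mul] at this
    exact sub_eq_zero.1 (this.resolve_left hfy.ne')
  · by_cases hyu : y = u
    · simp [hyu]
    have hfy : f u ≤ f y := not_lt.1 fun h => hyY ⟨hy, h⟩
    have hgy := hgu y (extremePoints_convexHull_subset hy) hyu
    have : (g + t w • f) u < (g + t w • f) y := by
      simp only [add_apply, smul_apply, smul_eq_mul]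
      nlinarith
    exact ⟨this.le, fun h => absurd h this.ne'⟩

theorem exists_isExtreme_segment_of_lt (V : Finset E) {u : E}
    (hu : u ∈ (convexHull ℝ (V : Set E)).extremePoints ℝ) (f : StrongDual ℝ E) {y : E}
    (hy : y ∈ convexHull ℝ (V : Set E)) (hyu : f y < f u) :
    ∃ w ∈ (convexHull ℝ (V : Set E)).extremePoints ℝ, u ≠ w ∧
      IsExtreme ℝ (convexHull ℝ (V : Set E)) (segment ℝ u w) ∧ f w < f u := by
  set P := convexHull ℝ (V : Set E)
  have hf : ∃ y ∈ P.extremePoints ℝ, f y < f u := by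
    by_contra! h
    exact (isMinOn_iff.1 (isMinOn_convexHull_of_forall_extremePoints V f h) y hy).not_gt hyu
  obtain ⟨φ, w, hw, hwu, hφw, hφ⟩ := exists_functional_exposing_pair_of_lt V hu f hf
  have hmin : ∀ x ∈ P.extremePoints ℝ, φ x = φ u → IsMinOn φ P x := fun x hx hxu =>
    isMinOn_convexHull_of_forall_extremePoints V φ fun y hy => hxu ▸ (hφ y hy).1
  have hF := isExposed_setOf_isMinOn φ P
  have hface : {x ∈ P | IsMinOn φ P x} = segment ℝ u w := by
    refine hF.eq_segment ⟨hu.1, hmin u hu rfl⟩ ⟨hw.1, hmin w hw hφw⟩ fun x hx => ?_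
    rw [hF.isExtreme.extremePoints_eq] at hx
    obtain ⟨⟨-, hxmin⟩, hxP⟩ := hx
    exact (hφ x hxP).2 (le_antisymm (isMinOn_iff.1 hxmin u hu.1) (hφ x hxP).1)
  exact ⟨w, hw, fun h => hwu.ne (h ▸ rfl), hface ▸ hF.isExtreme, hwu⟩

end Pivot

section EdgeGraph

variable {d : ℕ}

theorem edgeGraph_mono_of_isExtreme {A B : Set (Fin d → ℝ)} (h : IsExtreme ℝ A B) :
    edgeGraph d B ≤ edgeGraph d A :=
  fun _ _ hab => ⟨hab.1, h.trans hab.2⟩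

def edgeGraphHom {d₁ d₂ : ℕ} {T : (Fin d₁ → ℝ) →ᵃ[ℝ] (Fin d₂ → ℝ)} (hT : Function.Injective T)
    {A : Set (Fin d₁ → ℝ)} {B : Set (Fin d₂ → ℝ)} (hB : T '' A = B) :
    edgeGraph d₁ A →g edgeGraph d₂ B where
  toFun := T
  map_rel' {_ _} h := ⟨hT.ne h.1, by rw [← hB, ← image_segment, isExtreme_image_iff hT]; exact h.2⟩

theorem exists_walk_image_length_eq {d₁ d₂ : ℕ} {T : (Fin d₁ → ℝ) →ᵃ[ℝ] (Fin d₂ → ℝ)}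
    (hT : Function.Injective T) {A : Set (Fin d₁ → ℝ)} {B : Set (Fin d₂ → ℝ)} (hB : T '' A = B)
    {a b : Fin d₁ → ℝ} {a' b' : Fin d₂ → ℝ} (ha : T a = a') (hb : T b = b')
    (p : (edgeGraph d₁ A).Walk a b) :
    ∃ p' : (edgeGraph d₂ B).Walk a' b', p'.length = p.length := by
  subst ha hb
  exact ⟨p.map (edgeGraphHom hT hB), p.length_map _⟩

end EdgeGraph

section EdgeGraphWalks

variable {d : ℕ} (V : Finset (Fin d → ℝ))

theorem exists_walk_to_isMinOn (f : StrongDual ℝ (Fin d → ℝ)) (L : (Fin d → ℝ) → ℕ)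
    (hL : ∀ x ∈ (convexHull ℝ (V : Set (Fin d → ℝ))).extremePoints ℝ,
      ∀ y ∈ (convexHull ℝ (V : Set (Fin d → ℝ))).extremePoints ℝ, f y < f x → L y < L x)
    {x : Fin d → ℝ} (hx : x ∈ (convexHull ℝ (V : Set (Fin d → ℝ))).extremePoints ℝ) :
    ∃ x' ∈ (convexHull ℝ (V : Set (Fin d → ℝ))).extremePoints ℝ,
      IsMinOn f (convexHull ℝ (V : Set (Fin d → ℝ))) x' ∧
      ∃ p : (edgeGraph d (convexHull ℝ (V : Set (Fin d → ℝ)))).Walk x x',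
        p.length + L x' ≤ L x := by
  induction hn : L x using Nat.strong_induction_on generalizing x with
  | _ n ih =>
  by_cases hmin : IsMinOn f (convexHull ℝ (V : Set (Fin d → ℝ))) x
  · exact ⟨x, hx, hmin, .nil, by simp [hn]⟩
  obtain ⟨y, hy, hyx⟩ := by simpa [isMinOn_iff] using hmin
  obtain ⟨w, hw, hxw, hseg, hwx⟩ := exists_isExtreme_segment_of_lt V hx f hy hyx
  have hLw := hL x hx w hw hwx
  obtain ⟨x', hx', hmin', p, hp⟩ := ih (L w) (hn ▸ hLw) hw rfl
  have hadj : (edgeGraph d (convexHull ℝ (V : Set (Fin d → ℝ)))).Adj x w := ⟨hxw, hseg⟩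
  exact ⟨x', hx', hmin', .cons hadj p, by simp only [SimpleGraph.Walk.length_cons]; omega⟩

theorem exists_walk_length_le_card {a b : Fin d → ℝ}
    (ha : a ∈ (convexHull ℝ (V : Set (Fin d → ℝ))).extremePoints ℝ)
    (hb : b ∈ (convexHull ℝ (V : Set (Fin d → ℝ))).extremePoints ℝ) :
    ∃ p : (edgeGraph d (convexHull ℝ (V : Set (Fin d → ℝ)))).Walk a b, p.length ≤ V.card := by
  classical
  obtain ⟨g, hg⟩ := exists_forall_lt_of_mem_extremePoints V hb
  let L : (Fin d → ℝ) → ℕ := fun x => (V.filter (g · < g x)).card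
  have hL : ∀ x ∈ (convexHull ℝ (V : Set (Fin d → ℝ))).extremePoints ℝ,
      ∀ y ∈ (convexHull ℝ (V : Set (Fin d → ℝ))).extremePoints ℝ, g y < g x → L y < L x := by
    refine fun x _ y hy hyx => Finset.card_lt_card ?_
    refine (Finset.ssubset_iff_of_subset fun z hz => ?_).2 ⟨y, ?_, ?_⟩
    · simp only [Finset.mem_filter] at hz ⊢
      exact ⟨hz.1, hz.2.trans hyx⟩
    · exact Finset.mem_filter.2 ⟨extremePoints_convexHull_subset hy, hyx⟩
    · simp
  obtain ⟨x', hx', hmin, p, hp⟩ := exists_walk_to_isMinOn V g L hL ha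
  obtain rfl : x' = b := by
    by_contra h
    exact (hg x' (extremePoints_convexHull_subset hx') h).not_ge (isMinOn_iff.1 hmin b hb.1)
  exact ⟨p, ((Nat.le_add_right _ _).trans hp).trans (Finset.card_filter_le _ _)⟩

end EdgeGraphWalks

theorem card_le_pow_of_forall_coord_natCast_le {d k : ℕ} {V : Finset (Fin d → ℝ)}
    (hV : ∀ x ∈ V, ∀ i, ∃ m : ℕ, m ≤ k ∧ x i = m) : V.card ≤ (k + 1) ^ d := by
  classical
  calc V.card ≤ (Finset.univ.image fun (m : Fin d → Fin (k + 1)) i => ((m i : ℕ) : ℝ)).card := by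
        refine Finset.card_le_card fun x hx => ?_
        choose m hmk hm using hV x hx
        exact Finset.mem_image.2
          ⟨fun i => ⟨m i, Nat.lt_succ_of_le (hmk i)⟩, Finset.mem_univ _,
            funext fun i => (hm i).symm⟩
    _ ≤ (k + 1) ^ d := Finset.card_image_le.trans (by simp)

noncomputable def Fin.insertNthAffineMap {e : ℕ} (i : Fin (e + 1)) (c : ℝ) :
    (Fin e → ℝ) →ᵃ[ℝ] (Fin (e + 1) → ℝ) where
  toFun := Fin.insertNth (α := fun _ => ℝ) i c
  linear :=
    { toFun := Fin.insertNth (α := fun _ => ℝ) i 0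
      map_add' x y := by rw [← Fin.insertNth_add, add_zero]
      map_smul' r x := by
        ext j
        induction j using i.succAboveCases <;> simp }
  map_vadd' x y := by simp [← Fin.insertNth_add]

theorem Fin.insertNthAffineMap_injective {e : ℕ} (i : Fin (e + 1)) (c : ℝ) :
    Function.Injective (i.insertNthAffineMap c) :=
  Fin.insertNth_right_injective (α := fun _ => ℝ) c

noncomputable def cubeReflection (d k : ℕ) : (Fin d → ℝ) →ᵃ[ℝ] (Fin d → ℝ) :=
  (AffineEquiv.pointReflection ℝ fun _ => (k : ℝ) / 2).toAffineMap

@[simp]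
theorem cubeReflection_apply {d k : ℕ} (x : Fin d → ℝ) (i : Fin d) :
    cubeReflection d k x i = k - x i := by
  simp [cubeReflection, Equiv.pointReflection_apply]
  ring

theorem cubeReflection_involutive (d k : ℕ) : Function.Involutive (cubeReflection d k) :=
  fun x => funext fun i => by simp

namespace IsLatticePolytope

variable {d k : ℕ} {P : Set (Fin d → ℝ)} {u v : Fin d → ℝ}

theorem exists_coord_eq_of_mem_extremePoints (hP : IsLatticePolytope d k P)
    (hu : u ∈ P.extremePoints ℝ) (i : Fin d) : ∃ m : ℕ, m ≤ k ∧ u i = m := by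
  obtain ⟨V, -, hV, rfl⟩ := hP
  exact hV u (extremePoints_convexHull_subset hu) i

theorem dist_le_pow (hP : IsLatticePolytope d k P) (hu : u ∈ P.extremePoints ℝ)
    (hv : v ∈ P.extremePoints ℝ) : (edgeGraph d P).dist u v ≤ (k + 1) ^ d := by
  obtain ⟨V, -, hV, rfl⟩ := hP
  obtain ⟨p, hp⟩ := exists_walk_length_le_card V hu hv
  exact (SimpleGraph.dist_le p).trans (hp.trans (card_le_pow_of_forall_coord_natCast_le hV))

theorem polyDiam_le_pow (hP : IsLatticePolytope d k P) : polyDiam d P ≤ (k + 1) ^ d :=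
  csSup_le' fun _ ⟨_, hu, _, hv, h⟩ => h ▸ hP.dist_le_pow hu hv

theorem dist_le_deltaLP (hP : IsLatticePolytope d k P) (hu : u ∈ P.extremePoints ℝ)
    (hv : v ∈ P.extremePoints ℝ) : (edgeGraph d P).dist u v ≤ deltaLP d k :=
  calc (edgeGraph d P).dist u v ≤ polyDiam d P :=
        le_csSup ⟨(k + 1) ^ d, fun _ ⟨_, hu, _, hv, h⟩ => h ▸ hP.dist_le_pow hu hv⟩
          ⟨u, hu, v, hv, rfl⟩
    _ ≤ deltaLP d k :=
        le_csSup ⟨(k + 1) ^ d, fun _ ⟨_, hQ, h⟩ => h ▸ hQ.polyDiam_le_pow⟩ ⟨P, hP, rfl⟩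

theorem exists_walk_length_le_deltaLP (hP : IsLatticePolytope d k P)
    (hu : u ∈ P.extremePoints ℝ) (hv : v ∈ P.extremePoints ℝ) :
    ∃ p : (edgeGraph d P).Walk u v, p.length ≤ deltaLP d k := by
  have hr : (edgeGraph d P).Reachable u v := by
    obtain ⟨V, -, -, rfl⟩ := hP
    exact ⟨(exists_walk_length_le_card V hu hv).choose⟩
  obtain ⟨p, hp⟩ := hr.exists_walk_length_eq_dist
  exact ⟨p, hp ▸ hP.dist_le_deltaLP hu hv⟩

theorem image_cubeReflection (hP : IsLatticePolytope d k P) :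
    IsLatticePolytope d k (cubeReflection d k '' P) := by
  classical
  obtain ⟨V, hV0, hV, rfl⟩ := hP
  refine ⟨V.image (cubeReflection d k), hV0.image _, ?_, ?_⟩
  · simp only [Finset.mem_image]
    rintro _ ⟨x, hx, rfl⟩ i
    obtain ⟨m, hm, hxm⟩ := hV x hx i
    exact ⟨k - m, Nat.sub_le _ _, by simp [hxm, Nat.cast_sub hm]⟩
  · rw [Finset.coe_image, AffineMap.image_convexHull]

end IsLatticePolytope

namespace IsLatticePolytope

variable {e k : ℕ} {P : Set (Fin (e + 1) → ℝ)} {u v : Fin (e + 1) → ℝ}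

theorem exists_walk_length_le_deltaLP_of_coord_eq (hP : IsLatticePolytope (e + 1) k P)
    (i : Fin (e + 1)) (c : ℝ) (hc : ∀ x ∈ P, x i = c) (hu : u ∈ P.extremePoints ℝ)
    (hv : v ∈ P.extremePoints ℝ) :
    ∃ p : (edgeGraph (e + 1) P).Walk u v, p.length ≤ deltaLP e k := by
  classical
  obtain ⟨W, hW0, hW, rfl⟩ := hP
  have hWext : ∀ x ∈ (convexHull ℝ (W : Set (Fin (e + 1) → ℝ))).extremePoints ℝ, x ∈ W :=
    fun x hx => Finset.mem_coe.1 (extremePoints_convexHull_subset hx)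
  set σ := i.insertNthAffineMap c
  have hσ : ∀ x ∈ W, σ (i.removeNth x) = x := fun x hx => by
    simp [σ, Fin.insertNthAffineMap, ← hc x (subset_convexHull ℝ _ hx)]
  set Q := convexHull ℝ (W.image i.removeNth : Set (Fin e → ℝ))
  have hQ : σ '' Q = convexHull ℝ (W : Set (Fin (e + 1) → ℝ)) := by
    rw [AffineMap.image_convexHull, Finset.coe_image, image_image,
      (image_congr fun x hx => hσ x hx).trans (image_id' _)]
  have hQlat : IsLatticePolytope e k Q := by
    refine ⟨_, hW0.image _, ?_, rfl⟩
    simp only [Finset.mem_image]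
    rintro _ ⟨x, hx, rfl⟩ j
    exact hW x hx _
  have hext : ∀ x ∈ (convexHull ℝ (W : Set (Fin (e + 1) → ℝ))).extremePoints ℝ,
      i.removeNth x ∈ Q.extremePoints ℝ := fun x hx => by
    rwa [← image_mem_extremePoints_image_iff (Fin.insertNthAffineMap_injective i c), hQ,
      hσ x (hWext x hx)]
  obtain ⟨p, hp⟩ := hQlat.exists_walk_length_le_deltaLP (hext u hu) (hext v hv)
  obtain ⟨p', hp'⟩ := exists_walk_image_length_eq (Fin.insertNthAffineMap_injective i c) hQ
    (hσ u (hWext u hu)) (hσ v (hWext v hv)) p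
  exact ⟨p', hp' ▸ hp⟩

theorem exists_walk_length_le_deltaLP_of_isMinOn (hP : IsLatticePolytope (e + 1) k P)
    (i : Fin (e + 1)) (hu : u ∈ P.extremePoints ℝ) (hv : v ∈ P.extremePoints ℝ)
    (hui : IsMinOn (· i) P u) (hvi : IsMinOn (· i) P v) :
    ∃ p : (edgeGraph (e + 1) P).Walk u v, p.length ≤ deltaLP e k := by
  classical
  obtain ⟨V, -, hV, rfl⟩ := id hP
  set P := convexHull ℝ (V : Set (Fin (e + 1) → ℝ))
  let f : StrongDual ℝ (Fin (e + 1) → ℝ) := ContinuousLinearMap.proj i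
  set F := {x ∈ P | IsMinOn f P x}
  have hF := isExposed_setOf_isMinOn f P
  have hFlat : IsLatticePolytope (e + 1) k F := by
    refine ⟨V.filter (· ∈ F), ⟨u, Finset.mem_filter.2 ⟨?_, hu.1, hui⟩⟩,
      fun x hx => hV x (Finset.mem_filter.1 hx).1, hF.eq_convexHull_filter⟩
    exact Finset.mem_coe.1 (extremePoints_convexHull_subset hu)
  have hFi : ∀ x ∈ F, x i = u i := fun x hx =>
    le_antisymm (isMinOn_iff.1 hx.2 u hu.1) (isMinOn_iff.1 hui x hx.1)
  have hFext : ∀ x ∈ P.extremePoints ℝ, IsMinOn f P x → x ∈ F.extremePoints ℝ :=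
    fun x hx hmin => hF.isExtreme.extremePoints_eq ▸ ⟨⟨hx.1, hmin⟩, hx⟩
  obtain ⟨p, hp⟩ := hFlat.exists_walk_length_le_deltaLP_of_coord_eq i (u i) hFi
    (hFext u hu hui) (hFext v hv hvi)
  exact ⟨p.mapLe (edgeGraph_mono_of_isExtreme hF.isExtreme), by simpa using hp⟩

theorem exists_walk_length_le_deltaLP_add (hP : IsLatticePolytope (e + 1) k P)
    (hu : u ∈ P.extremePoints ℝ) (hv : v ∈ P.extremePoints ℝ) (i : Fin (e + 1)) :
    ∃ p : (edgeGraph (e + 1) P).Walk u v, (p.length : ℝ) ≤ deltaLP e k + u i + v i := by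
  obtain ⟨V, -, -, rfl⟩ := id hP
  let f : StrongDual ℝ (Fin (e + 1) → ℝ) := ContinuousLinearMap.proj i
  have hfloor : ∀ x ∈ (convexHull ℝ (V : Set (Fin (e + 1) → ℝ))).extremePoints ℝ,
      (⌊x i⌋₊ : ℝ) = x i := fun x hx => by
    obtain ⟨m, -, hm⟩ := hP.exists_coord_eq_of_mem_extremePoints hx i
    simp [hm]
  have hL : ∀ x ∈ (convexHull ℝ (V : Set (Fin (e + 1) → ℝ))).extremePoints ℝ,
      ∀ y ∈ (convexHull ℝ (V : Set (Fin (e + 1) → ℝ))).extremePoints ℝ,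
        f y < f x → ⌊y i⌋₊ < ⌊x i⌋₊ :=
    fun x hx y hy hyx => by
      rw [← Nat.cast_lt (α := ℝ), hfloor x hx, hfloor y hy]
      exact hyx
  obtain ⟨u', hu', hu'i, pu, hpu⟩ := exists_walk_to_isMinOn V f (⌊· i⌋₊) hL hu
  obtain ⟨v', hv', hv'i, pv, hpv⟩ := exists_walk_to_isMinOn V f (⌊· i⌋₊) hL hv
  obtain ⟨p, hp⟩ := hP.exists_walk_length_le_deltaLP_of_isMinOn i hu' hv' hu'i hv'i
  have hpu' : (pu.length : ℝ) ≤ u i :=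
    hfloor u hu ▸ by exact_mod_cast (Nat.le_add_right _ _).trans hpu
  have hpv' : (pv.length : ℝ) ≤ v i :=
    hfloor v hv ▸ by exact_mod_cast (Nat.le_add_right _ _).trans hpv
  have hp' : (p.length : ℝ) ≤ deltaLP e k := by exact_mod_cast hp
  refine ⟨pu.append (p.append pv.reverse), ?_⟩
  simp only [SimpleGraph.Walk.length_append, SimpleGraph.Walk.length_reverse, Nat.cast_add]
  linarith

theorem exists_walk_length_le_deltaLP_add_sub (hP : IsLatticePolytope (e + 1) k P)
    (hu : u ∈ P.extremePoints ℝ) (hv : v ∈ P.extremePoints ℝ) (i : Fin (e + 1)) :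
    ∃ p : (edgeGraph (e + 1) P).Walk u v,
      (p.length : ℝ) ≤ deltaLP e k + (k - u i) + (k - v i) := by
  set ρ := cubeReflection (e + 1) k
  have hinj : Function.Injective ρ := (cubeReflection_involutive _ _).injective
  have hρ : ρ '' (ρ '' P) = P := by
    simp only [image_image, ρ, cubeReflection_involutive _ _ _, image_id']
  have hext : ∀ x ∈ P.extremePoints ℝ, ρ x ∈ (ρ '' P).extremePoints ℝ :=
    fun x hx => (image_mem_extremePoints_image_iff hinj).2 hx
  obtain ⟨p, hp⟩ := hP.image_cubeReflection.exists_walk_length_le_deltaLP_add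
    (hext u hu) (hext v hv) i
  obtain ⟨p', hp'⟩ := exists_walk_image_length_eq hinj hρ
    (cubeReflection_involutive _ _ u) (cubeReflection_involutive _ _ v) p
  exact ⟨p', by simpa [hp', ρ] using hp⟩

end IsLatticePolytope

theorem cond1_antipodal_general (d k : ℕ)
    (P : Set (Fin d → ℝ)) (hP : IsLatticePolytope d k P)
    (u v : Fin d → ℝ) (hu : u ∈ P.extremePoints ℝ) (hv : v ∈ P.extremePoints ℝ)
    (hdist : (edgeGraph d P).dist u v = deltaLP (d - 1) k + k) :
    ∀ i, u i + v i = (k : ℝ) := by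
  obtain _ | e := d
  · exact fun i => i.elim0
  intro i
  have hδ : ((edgeGraph (e + 1) P).dist u v : ℝ) = deltaLP e k + k := by exact_mod_cast hdist
  obtain ⟨p, hp⟩ := hP.exists_walk_length_le_deltaLP_add hu hv i
  obtain ⟨q, hq⟩ := hP.exists_walk_length_le_deltaLP_add_sub hu hv i
  have hpd : ((edgeGraph (e + 1) P).dist u v : ℝ) ≤ p.length := by
    exact_mod_cast SimpleGraph.dist_le p
  have hqd : ((edgeGraph (e + 1) P).dist u v : ℝ) ≤ q.length := by
    exact_mod_cast SimpleGraph.dist_le q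
  linarith

theorem cond1_antipodal (d k : ℕ) (hd : 3 ≤ d)
    (P : Set (Fin d → ℝ)) (hP : IsLatticePolytope d k P)
    (u v : Fin d → ℝ) (hu : u ∈ P.extremePoints ℝ) (hv : v ∈ P.extremePoints ℝ)
    (hdist : (edgeGraph d P).dist u v = deltaLP (d - 1) k + k) :
    ∀ i, u i + v i = (k : ℝ) :=
  cond1_antipodal_general d k P hP u v hu hv hdist
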